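/- arXiv:2001.11922 — 4 statements merged into one kernel-verified Lean document; each statement's English description precedes it below -/
import Mathlib

section
/- Let A be an n×n complex matrix, v ∈ ℂ^n and p ≥ 1 a natural number. Then the function w_p(t) = t^p φ_p(tA) v satisfies w_p(0) = 0 and, for every t ∈ ℝ, w_p has derivative w_p'(t) = A w_p(t) + (t^{p−1}/(p−1)!) v. -/
/-!
Writing `t ^ p φ_p(tA) = ∑ₖ t^(k+p)/(k+p)! Aᵏ`, termwise differentiation lowers `p` by one,
and splitting off the `k = 0` term of `t^(p-1) φ_(p-1)(tA)` leaves
`t^(p-1)/(p-1)! + A t^p φ_p(tA)`. Both facts hold in any complete normed `ℂ`-algebra;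
applying `M ↦ M v` gives the theorem.
-/

open MeasureTheory

/-- `φ_p(M) = ∑_{k=0}^∞ M^k/(k+p)!` for a square complex matrix `M`;
`matPhi 0` is the matrix exponential. -/
noncomputable def matPhi {N : Type*} [Fintype N] [DecidableEq N] (p : ℕ) (M : Matrix N N ℂ) :
    Matrix N N ℂ :=
  ∑' k : ℕ, ((k + p).factorial : ℂ)⁻¹ • M ^ k

/-- `φ_p(z) = ∑_{k=0}^∞ z^k/(k+p)!` for `z ∈ ℂ`. -/
noncomputable def phiC (p : ℕ) (z : ℂ) : ℂ :=
  ∑' k : ℕ, z ^ k / ((k + p).factorial : ℂ)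

/-- The ordered simplex `{1 ≥ s 0 ≥ s 1 ≥ ⋯ ≥ s (k-1) ≥ 0}`, the domain of the
iterated integral `∫_0^1 ∫_0^{s_1} ⋯ ∫_0^{s_{k-2}} ⋯ ds_{k-1} ⋯ ds_1`. -/
def simplexSet (k : ℕ) : Set (Fin k → ℝ) :=
  {s | (∀ j, 0 ≤ s j ∧ s j ≤ 1) ∧ ∀ i j : Fin k, i ≤ j → s j ≤ s i}

/-- Divided difference of `f` over the `k+1` nodes `x 0, …, x k`, via the
Hermite–Genocchi formula
`f[x_0,…,x_k] = ∫_{Δ_k} f^{(k)}(x_0 + ∑_j s_j (x_{j+1} − x_j)) ds`. -/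
noncomputable def divDiff (f : ℂ → ℂ) {k : ℕ} (x : Fin (k + 1) → ℂ) : ℂ :=
  ∫ s in simplexSet k,
    iteratedDeriv k f (x 0 + ∑ j : Fin k, (s j : ℂ) * (x j.succ - x j.castSucc))

/-- Euclidean norm `‖x‖₂` of a complex vector. -/
noncomputable def vnorm {N : Type*} [Fintype N] (x : N → ℂ) : ℝ :=
  Real.sqrt (∑ i, ‖x i‖ ^ 2)

/-- Spectral operator norm `‖A‖₂` (operator norm induced by the Euclidean norm). -/
noncomputable def mnorm {N M : Type*} [Fintype N] [Fintype M] (A : Matrix N M ℂ) : ℝ :=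
  sSup {c : ℝ | ∃ x : M → ℂ, vnorm x ≤ 1 ∧ c = vnorm (A.mulVec x)}

/-- `A` is dissipative: `Re⟨A y, y⟩ ≤ 0` for all `y`. -/
def Dissipative {N : Type*} [Fintype N] (A : Matrix N N ℂ) : Prop :=
  ∀ y : N → ℂ, (dotProduct (star y) (A.mulVec y)).re ≤ 0

open scoped Nat

-- No `NormOneClass`: matrices indexed by `Fin 0` have `‖1‖ = 0`.
theorem norm_pow_le_norm_one_mul {𝔸 : Type*} [SeminormedRing 𝔸] (a : 𝔸) (k : ℕ) :
    ‖a ^ k‖ ≤ ‖(1 : 𝔸)‖ * ‖a‖ ^ k := by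
  induction k with
  | zero => simp
  | succ k ih =>
    calc ‖a ^ (k + 1)‖ ≤ ‖a ^ k‖ * ‖a‖ := by rw [pow_succ]; exact norm_mul_le _ _
      _ ≤ ‖(1 : 𝔸)‖ * ‖a‖ ^ k * ‖a‖ := by gcongr
      _ = ‖(1 : 𝔸)‖ * ‖a‖ ^ (k + 1) := by ring

section PhiFlow

variable {𝔸 : Type*} [NormedRing 𝔸] [NormedAlgebra ℂ 𝔸]

/-- `phiFlow m a t = t ^ m φ_m(t a)`. -/
noncomputable def phiFlow (m : ℕ) (a : 𝔸) (t : ℝ) : 𝔸 :=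
  ∑' k, ((t : ℂ) ^ (k + m) / (k + m)!) • a ^ k

theorem norm_phiFlow_term_le (m k : ℕ) (a : 𝔸) {t R : ℝ} (ht : |t| ≤ R) :
    ‖((t : ℂ) ^ (k + m) / (k + m)!) • a ^ k‖
      ≤ ‖(1 : 𝔸)‖ * R ^ m * ((R * ‖a‖) ^ k / k !) := by
  have hR : 0 ≤ R := (abs_nonneg t).trans ht
  have hfac : (k ! : ℝ) ≤ (k + m)! := by exact_mod_cast Nat.factorial_le (Nat.le_add_right k m)
  rw [norm_smul, norm_div, norm_pow, Complex.norm_real, Real.norm_eq_abs, Complex.norm_natCast]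
  calc |t| ^ (k + m) / (k + m)! * ‖a ^ k‖
      ≤ R ^ (k + m) / k ! * (‖(1 : 𝔸)‖ * ‖a‖ ^ k) := by
        gcongr
        exact norm_pow_le_norm_one_mul a k
    _ = ‖(1 : 𝔸)‖ * R ^ m * ((R * ‖a‖) ^ k / k !) := by ring

theorem hasDerivAt_phiFlow_term (m k : ℕ) (a : 𝔸) (t : ℝ) :
    HasDerivAt (fun s : ℝ ↦ ((s : ℂ) ^ (k + (m + 1)) / (k + (m + 1))!) • a ^ k)
      (((t : ℂ) ^ (k + m) / (k + m)!) • a ^ k) t := by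
  have h := (((hasDerivAt_pow (k + m + 1) (t : ℂ)).comp_ofReal).div_const
    ((k + m + 1)! : ℂ)).smul_const (a ^ k)
  have hcoeff : (t : ℂ) ^ (k + m) / (k + m)!
      = (k + m + 1 : ℕ) * (t : ℂ) ^ (k + m + 1 - 1) / (k + m + 1)! := by
    have hne : ((k + m : ℕ) : ℂ) + 1 ≠ 0 := Nat.cast_add_one_ne_zero (k + m)
    rw [add_tsub_cancel_right, Nat.factorial_succ]
    push_cast at hne ⊢
    field_simp
  rw [hcoeff]
  exact h

variable [CompleteSpace 𝔸]

theorem summable_phiFlow_term (m : ℕ) (a : 𝔸) (t : ℝ) :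
    Summable fun k ↦ ((t : ℂ) ^ (k + m) / (k + m)!) • a ^ k :=
  .of_norm_bounded ((Real.summable_pow_div_factorial _).mul_left _)
    fun k ↦ norm_phiFlow_term_le m k a le_rfl

theorem hasDerivAt_phiFlow (m : ℕ) (a : 𝔸) (t : ℝ) :
    HasDerivAt (phiFlow (m + 1) a) (phiFlow m a t) t := by
  set R := |t| + 1
  have ht : t ∈ Metric.ball (0 : ℝ) R := by simp [R]
  exact hasDerivAt_tsum_of_isPreconnected
    ((Real.summable_pow_div_factorial (R * ‖a‖)).mul_left (‖(1 : 𝔸)‖ * R ^ m))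
    Metric.isOpen_ball (convex_ball 0 R).isPreconnected
    (fun k y _ ↦ hasDerivAt_phiFlow_term m k a y)
    (fun k y hy ↦ norm_phiFlow_term_le m k a (by simpa using (Metric.mem_ball.mp hy).le))
    ht (summable_phiFlow_term (m + 1) a t) ht

theorem phiFlow_eq_add_mul_phiFlow_succ (m : ℕ) (a : 𝔸) (t : ℝ) :
    phiFlow m a t = ((t : ℂ) ^ m / m !) • 1 + a * phiFlow (m + 1) a t := by
  rw [phiFlow, (summable_phiFlow_term m a t).tsum_eq_zero_add, phiFlow,
    ← (summable_phiFlow_term (m + 1) a t).tsum_mul_left]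
  congr 1
  · simp
  · refine tsum_congr fun k ↦ ?_
    rw [mul_smul_comm, pow_succ', show k + 1 + m = k + (m + 1) by omega]

end PhiFlow

-- Its topology is the product topology in which `matPhi` is summed.
open scoped Matrix.Norms.Operator

theorem smul_matPhi_eq_phiFlow {N : Type*} [Fintype N] [DecidableEq N] (p : ℕ)
    (A : Matrix N N ℂ) (t : ℝ) : ((t : ℂ) ^ p) • matPhi p (t • A) = phiFlow p A t := by
  rw [matPhi, phiFlow, ← tsum_const_smul'']
  refine tsum_congr fun k ↦ ?_
  rw [← Complex.coe_smul, smul_pow, smul_smul, smul_smul]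
  congr 1
  ring

/-- for `p ≥ 1`, `w_p(t) = t^p φ_p(tA) v` satisfies `w_p(0) = 0` and
`w_p'(t) = A w_p(t) + (t^{p−1}/(p−1)!) v` for every `t ∈ ℝ`. -/
theorem statement0 (n : ℕ) (A : Matrix (Fin n) (Fin n) ℂ) (v : Fin n → ℂ)
    (p : ℕ) (hp : 1 ≤ p) (w : ℝ → Fin n → ℂ)
    (hw : ∀ t : ℝ, w t = ((t : ℂ) ^ p) • (matPhi p (t • A)).mulVec v) :
    w 0 = 0 ∧
      ∀ t : ℝ,
        HasDerivAt w
          (A.mulVec (w t) + (((t : ℂ) ^ (p - 1)) / ((p - 1).factorial : ℂ)) • v) t := by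
  obtain ⟨q, rfl⟩ := Nat.exists_eq_add_of_le' hp
  have hw' : w = fun t ↦ (phiFlow (q + 1) A t).mulVec v :=
    funext fun t ↦ by rw [hw, ← Matrix.smul_mulVec, smul_matPhi_eq_phiFlow]
  refine ⟨by simp [hw], fun t ↦ ?_⟩
  subst hw'
  have hderiv := ((((Matrix.mulVecBilin ℂ ℂ).flip v).restrictScalars ℝ).toContinuousLinearMap
    |>.hasFDerivAt.comp_hasDerivAt t (hasDerivAt_phiFlow q A t))
  refine hderiv.congr_deriv ?_
  change (phiFlow q A t).mulVec v = _
  rw [phiFlow_eq_add_mul_phiFlow_succ, Matrix.add_mulVec, Matrix.smul_mulVec, Matrix.one_mulVec,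
    ← Matrix.mulVec_mulVec, add_comm, Nat.add_sub_cancel]
end

section
/- In the perturbed Arnoldi setting with no perturbation (U_m = 0) and ‖v_{m+1}‖₂ ≤ 1, if A is dissipative, then for every p ∈ ℕ₀ and t > 0 the error norm is bounded by the defect integral: ‖l_{p,m}(t)‖₂ ≤ (h_{m+1,m}/t^p) ∫_0^t |δ_{p,m}(s)| ds = L_{p,m}(t). -/
open MeasureTheory

/-!
Put `G_M(s) = s^p φ_p(s M)`. Termwise differentiation gives `G_M' = M G_M + (p s^(p-1)/p!) I`,
where the scalar term does not depend on `M`. Hence the scaled error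
`e(s) = V G_H(s) β e₁ − G_A(s) V β e₁ = s^p l_{p,m}(s)` vanishes at `0` (also for `p = 0`, because
`v = V β e₁`) and, by the Arnoldi relation, solves `e' = A e − h δ_{p,m}(s) v_{m+1}`. Variation of
constants gives `t^p l_{p,m}(t) = −h ∫_0^t δ_{p,m}(s) exp((t − s) A) v_{m+1} ds`, and dissipativity
makes `exp(τ A)` a contraction for `τ ≥ 0`, since `‖exp(τ A) y‖²` has derivative
`2 Re ⟨exp(τ A) y, A exp(τ A) y⟩ ≤ 0`.
-/

open scoped Nat

section PhiPath

variable {𝔸 : Type*} [NormedRing 𝔸] [NormedAlgebra ℝ 𝔸]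

/-- `phiPath p a s = s ^ p • φ_p(s • a)`, expanded as a power series in `s`. -/
noncomputable def phiPath (p : ℕ) (a : 𝔸) (s : ℝ) : 𝔸 :=
  ∑' k : ℕ, (s ^ (k + p) / (k + p)!) • a ^ k

lemma summable_pow_div_factorial_mul_norm_pow (p : ℕ) (a : 𝔸) {r : ℝ} (hr : 0 ≤ r) :
    Summable fun k : ℕ => r ^ (k + p) / (k + p)! * ‖a ^ k‖ := by
  refine Summable.of_nonneg_of_le (fun k => by positivity) (fun k => ?_)
    ((NormedSpace.norm_expSeries_summable' (𝕂 := ℝ) (r • a)).mul_left (r ^ p))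
  have hfact : (k ! : ℝ) ≤ (k + p)! := mod_cast Nat.factorial_le (Nat.le_add_right k p)
  rw [smul_pow, norm_smul, norm_smul, Real.norm_eq_abs, Real.norm_eq_abs, abs_pow,
    abs_of_nonneg hr, abs_inv, Nat.abs_cast, pow_add]
  calc r ^ k * r ^ p / (k + p)! * ‖a ^ k‖ = r ^ p * (1 / (k + p)! * (r ^ k * ‖a ^ k‖)) := by ring
    _ ≤ r ^ p * (1 / k ! * (r ^ k * ‖a ^ k‖)) := by gcongr
    _ = _ := by ring

lemma phiPath_zero (p : ℕ) (a : 𝔸) : phiPath p a 0 = ((0 : ℝ) ^ p / p !) • 1 := by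
  rw [phiPath, tsum_eq_single 0 fun k hk => by simp [hk]]
  simp

variable [CompleteSpace 𝔸]

lemma summable_phiPath (p : ℕ) (a : 𝔸) (s : ℝ) :
    Summable fun k : ℕ => (s ^ (k + p) / (k + p)!) • a ^ k := by
  refine .of_norm_bounded (summable_pow_div_factorial_mul_norm_pow p a (abs_nonneg s)) fun k => ?_
  rw [norm_smul, Real.norm_eq_abs, abs_div, abs_pow, Nat.abs_cast]

lemma hasSum_phiPath_deriv (p : ℕ) (a : 𝔸) (s : ℝ) :
    HasSum (fun k : ℕ => (((k + p : ℕ) : ℝ) * s ^ (k + p - 1) / (k + p)!) • a ^ k)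
      ((p * s ^ (p - 1) / p !) • 1 + a * phiPath p a s) := by
  have hshift (k : ℕ) :
      (((k + 1 + p : ℕ) : ℝ) * s ^ (k + 1 + p - 1) / (k + 1 + p)!) • a ^ (k + 1)
        = a * ((s ^ (k + p) / (k + p)!) • a ^ k) := by
    rw [mul_smul_comm, ← pow_succ' a k, show k + 1 + p = (k + p) + 1 by omega, Nat.add_sub_cancel,
      Nat.factorial_succ]
    congr 1
    push_cast
    field_simp
  have hsum : HasSum (fun k : ℕ => (((k + 1 + p : ℕ) : ℝ) * s ^ (k + 1 + p - 1) / (k + 1 + p)!) •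
      a ^ (k + 1)) (a * phiPath p a s) := by
    simpa only [hshift, phiPath] using (summable_phiPath p a s).hasSum.mul_left a
  convert HasSum.zero_add (f := fun k : ℕ => (((k + p : ℕ) : ℝ) * s ^ (k + p - 1) / (k + p)!) •
    a ^ k) hsum using 2
  simp

lemma hasDerivAt_phiPath (p : ℕ) (a : 𝔸) (s : ℝ) :
    HasDerivAt (phiPath p a) ((p * s ^ (p - 1) / p !) • 1 + a * phiPath p a s) s := by
  set R := |s| + 1
  have hR : 1 ≤ R := by simp [R]
  have hs : s ∈ Metric.ball (0 : ℝ) R := by simp [R]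
  have hbound (k : ℕ) (y : ℝ) (hy : y ∈ Metric.ball (0 : ℝ) R) :
      ‖(((k + p : ℕ) : ℝ) * y ^ (k + p - 1) / (k + p)!) • a ^ k‖
        ≤ (2 * R) ^ (k + p) / (k + p)! * ‖a ^ k‖ := by
    rw [mem_ball_zero_iff, Real.norm_eq_abs] at hy
    have hcoeff : ((k + p : ℕ) : ℝ) * |y| ^ (k + p - 1) ≤ (2 * R) ^ (k + p) := by
      rw [mul_pow]
      gcongr
      · exact_mod_cast Nat.lt_two_pow_self.le
      · calc |y| ^ (k + p - 1) ≤ R ^ (k + p - 1) := by gcongr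
          _ ≤ R ^ (k + p) := pow_le_pow_right₀ hR (Nat.sub_le _ _)
    rw [norm_smul, Real.norm_eq_abs, abs_div, abs_mul, abs_pow, Nat.abs_cast, Nat.abs_cast]
    gcongr
  have hderiv := hasDerivAt_tsum_of_isPreconnected
    (summable_pow_div_factorial_mul_norm_pow p a (by positivity : 0 ≤ 2 * R))
    Metric.isOpen_ball (convex_ball (0 : ℝ) R).isPreconnected
    (fun k y _ => ((hasDerivAt_pow (k + p) y).div_const ((k + p)! : ℝ)).smul_const (a ^ k))
    hbound hs (summable_phiPath p a s) hs
  rwa [(hasSum_phiPath_deriv p a s).tsum_eq] at hderiv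

end PhiPath

section Semigroup

open NormedSpace

lemma hasDerivAt_exp_sub_smul {E : Type*} [NormedAddCommGroup E] [NormedSpace ℂ E]
    [CompleteSpace E] (T : E →L[ℂ] E) (t s : ℝ) :
    HasDerivAt (fun u : ℝ => exp ((t - u) • T)) (-(T * exp ((t - s) • T))) s := by
  simpa [Function.comp_def] using (hasDerivAt_exp_smul_const' (𝕂 := ℝ) T (t - s)).scomp s
    ((hasDerivAt_id s).const_sub t)

theorem eq_integral_exp_sub_smul_of_hasDerivAt {E : Type*} [NormedAddCommGroup E]
    [NormedSpace ℂ E] [CompleteSpace E] (T : E →L[ℂ] E) {e f : ℝ → E}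
    (he : ∀ s, HasDerivAt e (T (e s) + f s) s) (hf : Continuous f) (h0 : e 0 = 0) (t : ℝ) :
    e t = ∫ s in (0 : ℝ)..t, exp ((t - s) • T) (f s) := by
  have hexp (s : ℝ) := (ContinuousLinearMap.restrictScalarsL ℂ E E ℝ ℝ).hasFDerivAt.comp_hasDerivAt
    s (hasDerivAt_exp_sub_smul T t s)
  have hderiv (s : ℝ) :
      HasDerivAt (fun u => exp ((t - u) • T) (e u)) (exp ((t - s) • T) (f s)) s := by
    convert (hexp s).clm_apply (he s) using 1
    · rfl
    rw [((Commute.refl T).smul_right (t - s)).exp_right.eq]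
    simp
  have hcont : Continuous fun s : ℝ => exp ((t - s) • T) (f s) :=
    (continuous_iff_continuousAt.2 fun s => (hexp s).continuousAt).clm_apply hf
  rw [intervalIntegral.integral_eq_sub_of_hasDerivAt (fun s _ => hderiv s)
    (hcont.intervalIntegrable _ _)]
  simp [h0]

lemma norm_exp_smul_apply_le {E : Type*} [NormedAddCommGroup E] [InnerProductSpace ℂ E]
    [CompleteSpace E] (T : E →L[ℂ] E) (hT : ∀ x, RCLike.re (inner ℂ x (T x)) ≤ 0)
    {τ : ℝ} (hτ : 0 ≤ τ) (x : E) : ‖exp (τ • T) x‖ ≤ ‖x‖ := by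
  let _ := InnerProductSpace.complexToReal (G := E)
  have hpath (s : ℝ) : HasDerivAt (fun u : ℝ => exp (u • T) x) (T (exp (s • T) x)) s :=
    ((ContinuousLinearMap.apply ℂ E x).restrictScalars ℝ).hasFDerivAt.comp_hasDerivAt s
      (hasDerivAt_exp_smul_const' (𝕂 := ℝ) T s)
  have hanti : Antitone fun u : ℝ => ‖exp (u • T) x‖ ^ 2 :=
    antitone_of_hasDerivAt_nonpos
      (f' := fun s => 2 * RCLike.re (inner ℂ (exp (s • T) x) (T (exp (s • T) x))))
      (fun s => (hpath s).norm_sq) fun s => by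
        simpa using mul_nonpos_of_nonneg_of_nonpos zero_le_two (hT (exp (s • T) x))
  have hsq := hanti hτ
  simp only [zero_smul, exp_zero, one_apply_eq_self] at hsq
  exact (pow_le_pow_iff_left₀ (norm_nonneg _) (norm_nonneg _) two_ne_zero).mp hsq

end Semigroup

section KrylovError

open NormedSpace

variable {E F : Type*} [NormedAddCommGroup E] [NormedSpace ℂ E] [CompleteSpace E]
  [NormedAddCommGroup F] [NormedSpace ℂ F] [CompleteSpace F]

lemma hasDerivAt_phiPath_apply (p : ℕ) (T : E →L[ℂ] E) (x : E) (s : ℝ) :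
    HasDerivAt (fun u => phiPath p T u x)
      ((p * s ^ (p - 1) / p !) • x + T (phiPath p T s x)) s := by
  simpa [Function.comp_def] using
    ((ContinuousLinearMap.apply ℂ E x).restrictScalars ℝ).hasFDerivAt.comp_hasDerivAt s
      (hasDerivAt_phiPath p T s)

lemma continuous_phiPath_apply (p : ℕ) (T : E →L[ℂ] E) (x : E) :
    Continuous fun s => phiPath p T s x :=
  continuous_iff_continuousAt.2 fun s => (hasDerivAt_phiPath_apply p T x s).continuousAt

theorem krylovError_eq_neg_integral (p : ℕ) (A : E →L[ℂ] E) (H : F →L[ℂ] F) (V R : F →L[ℂ] E)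
    (hAV : A ∘L V = V ∘L H + R) (x : F) (t : ℝ) :
    V (phiPath p H t x) - phiPath p A t (V x)
      = -∫ s in (0 : ℝ)..t, exp ((t - s) • A) (R (phiPath p H s x)) := by
  have hVH (y : F) : V (H y) = A (V y) - R y := by
    rw [eq_sub_iff_add_eq, ← ContinuousLinearMap.comp_apply, ← add_apply, ← hAV,
      ContinuousLinearMap.comp_apply]
  have hderiv (s : ℝ) : HasDerivAt (fun u => V (phiPath p H u x) - phiPath p A u (V x))
      (A (V (phiPath p H s x) - phiPath p A s (V x)) + -R (phiPath p H s x)) s := by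
    convert ((V.restrictScalars ℝ).hasFDerivAt.comp_hasDerivAt s
      (hasDerivAt_phiPath_apply p H x s)).sub (hasDerivAt_phiPath_apply p A (V x) s) using 1
    · rfl
    simp only [ContinuousLinearMap.coe_restrictScalars', map_add, map_sub, V.map_smul_of_tower,
      hVH]
    abel
  rw [eq_integral_exp_sub_smul_of_hasDerivAt A hderiv
    (R.continuous.comp (continuous_phiPath_apply p H x)).neg
    (by simp [phiPath_zero, V.map_smul_of_tower]) t]
  simp only [map_neg, intervalIntegral.integral_neg]

end KrylovError

theorem norm_krylovError_le {E F : Type*} [NormedAddCommGroup E] [InnerProductSpace ℂ E]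
    [CompleteSpace E] [NormedAddCommGroup F] [NormedSpace ℂ F] [CompleteSpace F]
    (p : ℕ) (A : E →L[ℂ] E) (H : F →L[ℂ] F) (V R : F →L[ℂ] E) (hAV : A ∘L V = V ∘L H + R)
    (hA : ∀ y, RCLike.re (inner ℂ y (A y)) ≤ 0) (x : F) {t : ℝ} (ht : 0 ≤ t) :
    ‖V (phiPath p H t x) - phiPath p A t (V x)‖ ≤ ∫ s in (0 : ℝ)..t, ‖R (phiPath p H s x)‖ := by
  rw [krylovError_eq_neg_integral p A H V R hAV x t, norm_neg]
  refine intervalIntegral.norm_integral_le_of_norm_le ht (.of_forall fun s hs => ?_)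
    ((R.continuous.comp (continuous_phiPath_apply p H x)).norm.intervalIntegrable _ _)
  exact norm_exp_smul_apply_le A hA (sub_nonneg.2 hs.2) _

section Matrices

open Matrix WithLp

variable {N K : Type*} [Fintype K] [DecidableEq K]

lemma smul_vecMulVec_single_one_mulVec (c : ℝ) (w : N → ℂ) (j : K) (z : K → ℂ) :
    (c • vecMulVec w (Pi.single j 1)) *ᵥ z = ((c : ℂ) * z j) • w := by
  rw [← Complex.coe_smul, smul_mulVec, vecMulVec_mulVec, single_one_dotProduct, op_smul_eq_smul,
    smul_smul]

variable [Fintype N]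

lemma vnorm_eq_norm_toLp (x : N → ℂ) : vnorm x = ‖toLp 2 x‖ := by
  rw [vnorm, EuclideanSpace.norm_eq]

lemma vnorm_smul (c : ℂ) (x : N → ℂ) : vnorm (c • x) = ‖c‖ * vnorm x := by
  rw [vnorm_eq_norm_toLp, WithLp.toLp_smul, norm_smul, ← vnorm_eq_norm_toLp]

noncomputable def euclideanCLM (V : Matrix N K ℂ) : EuclideanSpace ℂ K →L[ℂ] EuclideanSpace ℂ N :=
  LinearMap.toContinuousLinearMap (toEuclideanLin V)

lemma euclideanCLM_toLp (V : Matrix N K ℂ) (x : K → ℂ) :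
    euclideanCLM V (toLp 2 x) = toLp 2 (V *ᵥ x) :=
  rfl

variable [DecidableEq N]

lemma Dissipative.re_inner_toEuclideanCLM_nonpos {A : Matrix N N ℂ} (hA : Dissipative A)
    (y : EuclideanSpace ℂ N) : RCLike.re (inner ℂ y (toEuclideanCLM (𝕜 := ℂ) A y)) ≤ 0 := by
  rw [EuclideanSpace.inner_eq_star_dotProduct, ofLp_toEuclideanCLM, dotProduct_comm]
  exact hA (ofLp y)

lemma toEuclideanCLM_comp_euclideanCLM {A : Matrix N N ℂ} {V R : Matrix N K ℂ}
    {H : Matrix K K ℂ} (h : A * V = V * H + R) :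
    toEuclideanCLM (𝕜 := ℂ) A ∘L euclideanCLM V
      = euclideanCLM V ∘L toEuclideanCLM (𝕜 := ℂ) H + euclideanCLM R := by
  ext1 y
  induction y using WithLp.rec
  simp [euclideanCLM_toLp, mulVec_mulVec, h, add_mulVec]

lemma toEuclideanCLM_cpow_smul_matPhi (p : ℕ) (M : Matrix N N ℂ) (s : ℝ) :
    toEuclideanCLM (𝕜 := ℂ) ((s : ℂ) ^ p • matPhi p (s • M))
      = phiPath p (toEuclideanCLM (𝕜 := ℂ) M) s := by
  have hmap : toEuclideanCLM (𝕜 := ℂ) (matPhi p (s • M))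
      = ∑' k : ℕ, toEuclideanCLM (𝕜 := ℂ) (((k + p)! : ℂ)⁻¹ • (s • M) ^ k) :=
    (toEuclideanCLM (𝕜 := ℂ) (n := N)).toAlgEquiv.toLinearEquiv.toContinuousLinearEquiv.map_tsum
  rw [map_smul, hmap, phiPath, ← tsum_const_smul'']
  congr 1
  funext k
  rw [← Complex.coe_smul s M, smul_pow, map_smul, map_smul, map_pow, smul_smul, smul_smul,
    ← Complex.coe_smul (_ / _)]
  congr 1
  push_cast
  ring

lemma toLp_cpow_smul_matPhi_mulVec (p : ℕ) (M : Matrix N N ℂ) (s : ℝ) (x : N → ℂ) :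
    toLp 2 (((s : ℂ) ^ p • matPhi p (s • M)) *ᵥ x)
      = phiPath p (toEuclideanCLM (𝕜 := ℂ) M) s (toLp 2 x) := by
  rw [← toEuclideanCLM_cpow_smul_matPhi, toEuclideanCLM_toLp]

theorem pow_mul_vnorm_krylovError_le {A : Matrix N N ℂ} {V R : Matrix N K ℂ} {H : Matrix K K ℂ}
    (hAV : A * V = V * H + R) (hA : Dissipative A) (p : ℕ) (y : K → ℂ) {t : ℝ} (ht : 0 ≤ t) :
    t ^ p * vnorm (V *ᵥ (matPhi p (t • H) *ᵥ y) - matPhi p (t • A) *ᵥ (V *ᵥ y))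
      ≤ ∫ s in (0 : ℝ)..t, vnorm (R *ᵥ (((s : ℂ) ^ p • matPhi p (s • H)) *ᵥ y)) := by
  calc t ^ p * vnorm (V *ᵥ (matPhi p (t • H) *ᵥ y) - matPhi p (t • A) *ᵥ (V *ᵥ y))
      = ‖euclideanCLM V (phiPath p (toEuclideanCLM (𝕜 := ℂ) H) t (toLp 2 y))
          - phiPath p (toEuclideanCLM (𝕜 := ℂ) A) t (euclideanCLM V (toLp 2 y))‖ := by
        rw [← toLp_cpow_smul_matPhi_mulVec, euclideanCLM_toLp, euclideanCLM_toLp,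
          ← toLp_cpow_smul_matPhi_mulVec, ← WithLp.toLp_sub, ← vnorm_eq_norm_toLp,
          smul_mulVec, smul_mulVec, mulVec_smul, ← smul_sub, vnorm_smul, norm_pow,
          Complex.norm_real, Real.norm_of_nonneg ht]
    _ ≤ ∫ s in (0 : ℝ)..t, ‖euclideanCLM R (phiPath p (toEuclideanCLM (𝕜 := ℂ) H) s (toLp 2 y))‖ :=
        norm_krylovError_le p _ _ _ _ (toEuclideanCLM_comp_euclideanCLM hAV)
          hA.re_inner_toEuclideanCLM_nonpos (toLp 2 y) ht
    _ = _ := by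
        simp only [← toLp_cpow_smul_matPhi_mulVec, euclideanCLM_toLp, vnorm_eq_norm_toLp]

end Matrices

theorem statement3_general (n m : ℕ) (A : Matrix (Fin n) (Fin n) ℂ)
    (V : Matrix (Fin n) (Fin (m + 1)) ℂ) (H : Matrix (Fin (m + 1)) (Fin (m + 1)) ℂ)
    (vnext : Fin n → ℂ)
    (h β : ℝ) (hh : 0 < h)
    (harnoldi : A * V = V * H + h • Matrix.vecMulVec vnext (Pi.single (Fin.last m) 1))
    (hvnext : vnorm vnext ≤ 1)
    (hdiss : Dissipative A)
    (v : Fin n → ℂ) (hv : v = (β : ℂ) • V.mulVec (Pi.single 0 1))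
    (l : ℕ → ℝ → Fin n → ℂ)
    (hl : ∀ p t, l p t =
      (β : ℂ) • V.mulVec ((matPhi p (t • H)).mulVec (Pi.single 0 1))
        - (matPhi p (t • A)).mulVec v)
    (δ : ℕ → ℝ → ℂ)
    (hδ : ∀ p t, δ p t = (β : ℂ) * (t : ℂ) ^ p * (matPhi p (t • H)) (Fin.last m) 0)
    (p : ℕ) (t : ℝ) (ht : 0 < t) :
    vnorm (l p t) ≤ (h / t ^ p) * ∫ s in (0:ℝ)..t, ‖δ p s‖ := by
  set y : Fin (m + 1) → ℂ := (β : ℂ) • Pi.single 0 1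
  have herror : l p t = V.mulVec ((matPhi p (t • H)).mulVec y)
      - (matPhi p (t • A)).mulVec (V.mulVec y) := by
    simp only [hl, hv, y, Matrix.mulVec_smul]
  have hdefect (s : ℝ) : (((s : ℂ) ^ p • matPhi p (s • H)).mulVec y) (Fin.last m) = δ p s := by
    rw [hδ, Matrix.mulVec_smul, Matrix.mulVec_single_one, Pi.smul_apply, Matrix.col_apply,
      Matrix.smul_apply, smul_eq_mul, smul_eq_mul, mul_assoc]
  have hresidual (s : ℝ) : vnorm ((h • Matrix.vecMulVec vnext (Pi.single (Fin.last m) 1)).mulVec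
      (((s : ℂ) ^ p • matPhi p (s • H)).mulVec y)) = h * vnorm vnext * ‖δ p s‖ := by
    rw [smul_vecMulVec_single_one_mulVec, hdefect, vnorm_smul, norm_mul, Complex.norm_real,
      Real.norm_of_nonneg hh.le, mul_right_comm]
  have hbound := pow_mul_vnorm_krylovError_le harnoldi hdiss p y ht.le
  simp only [← herror, hresidual, intervalIntegral.integral_const_mul] at hbound
  have hδ_nonneg : 0 ≤ ∫ s in (0 : ℝ)..t, ‖δ p s‖ :=
    intervalIntegral.integral_nonneg ht.le fun s _ => norm_nonneg _
  rw [div_mul_eq_mul_div, le_div_iff₀ (pow_pos ht p), mul_comm]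
  calc t ^ p * vnorm (l p t) ≤ h * vnorm vnext * ∫ s in (0 : ℝ)..t, ‖δ p s‖ := hbound
    _ ≤ h * 1 * ∫ s in (0 : ℝ)..t, ‖δ p s‖ := by gcongr
    _ = _ := by ring

/-- in the exact (unperturbed) Arnoldi setting with `‖v_{m+1}‖₂ ≤ 1`
and `A` dissipative, the Krylov error norm is bounded by the defect integral. -/
theorem statement3 (n m : ℕ) (A : Matrix (Fin n) (Fin n) ℂ)
    (V : Matrix (Fin n) (Fin (m + 1)) ℂ) (H : Matrix (Fin (m + 1)) (Fin (m + 1)) ℂ)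
    (vnext : Fin n → ℂ)
    (h β : ℝ) (hh : 0 < h) (hβ : 0 ≤ β)
    (harnoldi : A * V = V * H + h • Matrix.vecMulVec vnext (Pi.single (Fin.last m) 1))
    (hvnext : vnorm vnext ≤ 1)
    (hdiss : Dissipative A)
    (v : Fin n → ℂ) (hv : v = (β : ℂ) • V.mulVec (Pi.single 0 1))
    (l : ℕ → ℝ → Fin n → ℂ)
    (hl : ∀ p t, l p t =
      (β : ℂ) • V.mulVec ((matPhi p (t • H)).mulVec (Pi.single 0 1))
        - (matPhi p (t • A)).mulVec v)
    (δ : ℕ → ℝ → ℂ)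
    (hδ : ∀ p t, δ p t = (β : ℂ) * (t : ℂ) ^ p * (matPhi p (t • H)) (Fin.last m) 0)
    (p : ℕ) (t : ℝ) (ht : 0 < t) :
    vnorm (l p t) ≤ (h / t ^ p) * ∫ s in (0:ℝ)..t, ‖δ p s‖ :=
  statement3_general n m A V H vnext h β hh harnoldi hvnext hdiss v hv l hl δ hδ p t ht
end

section
/- Let H ∈ ℂ^{m×m}, p ∈ ℕ with p ≥ 1, and t ∈ ℝ. Define the (m+p)×(m+p) block matrix H̃ = [[H, 0_{m×p}], [e_1 e_m^*, J]], where J ∈ ℂ^{p×p} has ones on its first subdiagonal and zeros elsewhere. Then t^p · e_m^* φ_p(t H) e_1 = e_{m+p}^* exp(t H̃) e_1. -/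
open MeasureTheory

/-! Below its `H` block, row `i` of `H̃` is `e_{i-1}^*`, so `(H̃ ^ (k+1))_{i,0} = (H̃ ^ k)_{i-1,0}`
there, while the upper-left block of `H̃ ^ k` is `H ^ k`. Hence
`(H̃ ^ k)_{m+p,0} = (H ^ (k - p))_{m,0}` for `k ≥ p` and `0` for `k < p`; substituting this into the
exponential series and shifting the summation index by `p` turns `∑ t^k/k! (H̃^k)_{m+p,0}` into
`t^p ∑ t^j/(j+p)! (H^j)_{m,0}`. -/

open NormedSpace in
theorem summable_inv_factorial_add_smul_pow {𝕂 𝔸 : Type*} [RCLike 𝕂] [NormedRing 𝔸]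
    [NormedAlgebra 𝕂 𝔸] [CompleteSpace 𝔸] (p : ℕ) (x : 𝔸) :
    Summable fun k : ℕ => ((k + p).factorial⁻¹ : 𝕂) • x ^ k := by
  refine .of_norm_bounded (norm_expSeries_summable' (𝕂 := 𝕂) x) fun k => ?_
  simp only [norm_smul, norm_inv, RCLike.norm_natCast]
  gcongr
  exact Nat.le_add_right k p

theorem matPhi_apply {N : Type*} [Fintype N] [DecidableEq N] (p : ℕ) (M : Matrix N N ℂ)
    (i j : N) : matPhi p M i j = ∑' k : ℕ, ((k + p).factorial : ℂ)⁻¹ * (M ^ k) i j := by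
  -- any normed-ring structure on matrices induces the entrywise topology; take the `L∞` one
  let _ := Matrix.linftyOpNormedRing (n := N) (α := ℂ)
  let _ := Matrix.linftyOpNormedAlgebra (n := N) (α := ℂ) (R := ℂ)
  have hs := (summable_inv_factorial_add_smul_pow (𝕂 := ℂ) p M).hasSum
  exact (Pi.hasSum.mp (Pi.hasSum.mp hs i) j).tsum_eq.symm

theorem tsum_ite_le_sub {α : Type*} [AddCommMonoid α] [TopologicalSpace α] (p : ℕ) (f : ℕ → α) :
    ∑' k, (if p ≤ k then f (k - p) else 0) = ∑' j, f j := by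
  rw [← (add_left_injective p).tsum_eq]
  · simp
  · intro k hk
    have : p ≤ k := by by_contra h; simp [h] at hk
    exact ⟨k - p, Nat.sub_add_cancel this⟩

/-- The block matrix `[[H, 0], [e_1 e_{m+1}^*, J]]`, with `J` the `p × p` shift matrix. -/
def borderedMatrix {R : Type*} [Zero R] [One R] {m : ℕ} (H : Matrix (Fin (m + 1)) (Fin (m + 1)) R)
    (p : ℕ) : Matrix (Fin (m + 1 + p)) (Fin (m + 1 + p)) R :=
  Matrix.of fun i j =>
    if hi : (i : ℕ) < m + 1 then
      (if hj : (j : ℕ) < m + 1 then H ⟨i, hi⟩ ⟨j, hj⟩ else 0)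
    else
      (if (i : ℕ) = m + 1 ∧ (j : ℕ) = m then 1
       else if (i : ℕ) = (j : ℕ) + 1 ∧ m + 1 ≤ (j : ℕ) then 1 else 0)

namespace borderedMatrix

variable {R : Type*} {m p : ℕ}

section ZeroOne

variable [Zero R] [One R] (H : Matrix (Fin (m + 1)) (Fin (m + 1)) R)

@[simp]
theorem apply_castAdd_castAdd (i j : Fin (m + 1)) :
    borderedMatrix H p (Fin.castAdd p i) (Fin.castAdd p j) = H i j := by
  simp [borderedMatrix, Fin.is_le]

@[simp]
theorem apply_castAdd_natAdd (i : Fin (m + 1)) (j : Fin p) :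
    borderedMatrix H p (Fin.castAdd p i) (Fin.natAdd (m + 1) j) = 0 := by
  simp only [borderedMatrix, Matrix.of_apply, Fin.val_castAdd, Fin.val_natAdd, dif_pos i.isLt,
    dif_neg (Nat.not_lt.mpr (Nat.le_add_right (m + 1) j))]

theorem apply_of_le {i : Fin (m + 1 + p)} (hi : m + 1 ≤ i) (j : Fin (m + 1 + p)) :
    borderedMatrix H p i j = if (j : ℕ) + 1 = i then 1 else 0 := by
  simp only [borderedMatrix, Matrix.of_apply, dif_neg (not_lt.mpr hi)]
  split_ifs <;> first | rfl | omega

end ZeroOne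

variable [Semiring R] (H : Matrix (Fin (m + 1)) (Fin (m + 1)) R)

theorem mul_apply_of_le (A : Matrix (Fin (m + 1 + p)) (Fin (m + 1 + p)) R)
    {i : Fin (m + 1 + p)} (hi : m + 1 ≤ i) (j : Fin (m + 1 + p)) :
    (borderedMatrix H p * A) i j = A ⟨i - 1, by omega⟩ j := by
  rw [Matrix.mul_apply, Finset.sum_eq_single ⟨i - 1, by omega⟩]
  · rw [apply_of_le H hi, if_pos (by simp; omega), one_mul]
  · intro l _ hl
    rw [apply_of_le H hi, if_neg (fun h => hl (Fin.ext (by simp; omega))), zero_mul]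
  · simp

theorem pow_apply_castAdd (k : ℕ) (i j : Fin (m + 1)) :
    (borderedMatrix H p ^ k) (Fin.castAdd p i) (Fin.castAdd p j) = (H ^ k) i j := by
  induction k generalizing i with
  | zero => simp [Matrix.one_apply]
  | succ k ih => simp [pow_succ', Matrix.mul_apply, Fin.sum_univ_add, ih]

theorem pow_apply_zero (k : ℕ) {j : ℕ} (hj : j ≤ p) :
    (borderedMatrix H p ^ k) ⟨m + j, by omega⟩ ⟨0, by omega⟩ =
      if j ≤ k then (H ^ (k - j)) (Fin.last m) 0 else 0 := by
  induction j generalizing k with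
  | zero => exact pow_apply_castAdd H k (Fin.last m) 0
  | succ j ih =>
    cases k with
    | zero => simp [Fin.ext_iff]
    | succ k =>
      rw [pow_succ', mul_apply_of_le H _ (by simp)]
      simpa using ih k (by omega)

end borderedMatrix

/-- `t^p ⋅ e_{m+1}^* φ_p(tH) e_1 = e_{m+1+p}^* exp(t H̃) e_1`, where
`H̃ = [[H, 0], [e_1 e_{m+1}^*, J]]` and `J` has ones on its first subdiagonal. -/
theorem statement5 (m p : ℕ)
    (H : Matrix (Fin (m + 1)) (Fin (m + 1)) ℂ) (t : ℝ)
    (Ht : Matrix (Fin (m + 1 + p)) (Fin (m + 1 + p)) ℂ)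
    (hHt : ∀ i j : Fin (m + 1 + p), Ht i j =
      if hi : (i : ℕ) < m + 1 then
        (if hj : (j : ℕ) < m + 1 then H ⟨i, hi⟩ ⟨j, hj⟩ else 0)
      else
        (if (i : ℕ) = m + 1 ∧ (j : ℕ) = m then 1
         else if (i : ℕ) = (j : ℕ) + 1 ∧ m + 1 ≤ (j : ℕ) then 1 else 0)) :
    (t : ℂ) ^ p * (matPhi p (t • H)) (Fin.last m) 0 =
      (matPhi 0 (t • Ht)) ⟨m + p, by omega⟩ ⟨0, by omega⟩ := by
  obtain rfl : Ht = borderedMatrix H p := Matrix.ext hHt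
  let g (j : ℕ) : ℂ := ((j + p).factorial : ℂ)⁻¹ * ((t • H) ^ j) (Fin.last m) 0
  have hterm (k : ℕ) : ((k + 0).factorial : ℂ)⁻¹ * ((t • borderedMatrix H p) ^ k)
      ⟨m + p, by omega⟩ ⟨0, by omega⟩ = if p ≤ k then (t : ℂ) ^ p * g (k - p) else 0 := by
    simp only [g, smul_pow, Matrix.smul_apply, borderedMatrix.pow_apply_zero H k le_rfl,
      Complex.real_smul]
    split_ifs with hpk
    · obtain ⟨j, rfl⟩ := Nat.exists_eq_add_of_le' hpk
      simp only [Nat.add_sub_cancel, add_zero]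
      push_cast
      ring
    · simp
  rw [matPhi_apply, matPhi_apply, tsum_congr hterm, tsum_ite_le_sub p fun j => (t : ℂ) ^ p * g j,
    tsum_mul_left]
end

section
/- For arbitrary nodes λ_1,…,λ_k ∈ ℂ, any p ∈ ℕ₀ and any t ≥ 0, one has ∫_0^t s^p (φ_p)_s[λ_1,…,λ_k] ds = t^{p+1} (φ_{p+1})_t[λ_1,…,λ_k]. -/
open MeasureTheory

/-! The `k`-th derivative of `z ↦ φ_p(c z)` is `c^k φ_p^{(k)}(c z)`, so `s^p (φ_p)_s[λ]` is the
integral over the simplex of `s^{p+k} φ_p^{(k)}(s ν)`, `ν` running through the Hermite–Genocchi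
points. Comparing Taylor coefficients gives `φ_p^{(k)} = (p+k+1) φ_{p+1}^{(k)} + z φ_{p+1}^{(k+1)}`,
which says exactly that `s ↦ s^{p+k+1} φ_{p+1}^{(k)}(s ν)` is an antiderivative of
`s^{p+k} φ_p^{(k)}(s ν)`. The integrand is continuous on the compact set `uIcc 0 t × Δ_k`, so the
two integrals may be swapped. -/

open scoped Nat

section EntireSeries

variable {𝕜 : Type*} [RCLike 𝕜] {a : ℕ → 𝕜}

lemma summable_mul_pow_of_norm_le_inv_factorial (ha : ∀ m, ‖a m‖ ≤ (m ! : ℝ)⁻¹) (z : 𝕜) :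
    Summable fun m => a m * z ^ m :=
  .of_norm_bounded (Real.summable_pow_div_factorial ‖z‖) fun m => by
    rw [norm_mul, norm_pow, div_eq_inv_mul]
    exact mul_le_mul_of_nonneg_right (ha m) (by positivity)

lemma norm_succ_mul_le_inv_factorial (ha : ∀ m, ‖a m‖ ≤ (m ! : ℝ)⁻¹) (m : ℕ) :
    ‖((m + 1 : ℕ) : 𝕜) * a (m + 1)‖ ≤ (m ! : ℝ)⁻¹ := by
  rw [norm_mul, RCLike.norm_natCast]
  calc ((m + 1 : ℕ) : ℝ) * ‖a (m + 1)‖ ≤ (m + 1 : ℕ) * ((m + 1)! : ℝ)⁻¹ := by gcongr; exact ha _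
    _ = (m ! : ℝ)⁻¹ := by rw [Nat.factorial_succ]; push_cast; field_simp

lemma hasDerivAt_tsum_mul_pow (ha : ∀ m, ‖a m‖ ≤ (m ! : ℝ)⁻¹) (z : 𝕜) :
    HasDerivAt (fun w => ∑' m, a m * w ^ m)
      (∑' m, ((m + 1 : ℕ) : 𝕜) * a (m + 1) * z ^ m) z := by
  have hsplit : (fun w => ∑' m, a m * w ^ m) = fun w => a 0 + ∑' m, a (m + 1) * w ^ (m + 1) :=
    funext fun w => by simpa using (summable_mul_pow_of_norm_le_inv_factorial ha w).tsum_eq_zero_add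
  rw [hsplit]
  set R := ‖z‖ + 1
  refine .const_add _ <| hasDerivAt_tsum_of_isPreconnected (y₀ := (0 : 𝕜)) (y := z)
    (g := fun m w => a (m + 1) * w ^ (m + 1))
    (g' := fun m w => ((m + 1 : ℕ) : 𝕜) * a (m + 1) * w ^ m)
    (Real.summable_pow_div_factorial R) Metric.isOpen_ball (convex_ball (0 : 𝕜) R).isPreconnected
    (fun m y _ => ?_) (fun m y hy => ?_) (Metric.mem_ball_self (by positivity))
    (by simp) (by simp [R])
  · simpa [mul_comm, mul_left_comm, mul_assoc] using
      (hasDerivAt_pow (m + 1) y).const_mul (a (m + 1))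
  · rw [norm_mul, norm_pow, div_eq_inv_mul]
    have hy : ‖y‖ ≤ R := (mem_ball_zero_iff.mp hy).le
    gcongr
    exact norm_succ_mul_le_inv_factorial ha m

lemma mul_tsum_succ_mul_pow (ha : ∀ m, ‖a m‖ ≤ (m ! : ℝ)⁻¹) (z : 𝕜) :
    z * ∑' m, ((m + 1 : ℕ) : 𝕜) * a (m + 1) * z ^ m = ∑' m : ℕ, (m : 𝕜) * a m * z ^ m := by
  have hs : Summable fun m : ℕ => (m : 𝕜) * a m * z ^ m := by
    refine (summable_nat_add_iff 1).mp ?_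
    exact ((summable_mul_pow_of_norm_le_inv_factorial
      (norm_succ_mul_le_inv_factorial ha) z).mul_left z).congr fun m => by push_cast; ring
  rw [hs.tsum_eq_zero_add, ← tsum_mul_left]
  simp only [Nat.cast_zero, zero_mul, zero_add]
  exact tsum_congr fun m => by ring

end EntireSeries

noncomputable def phiDerivCoeff (p k m : ℕ) : ℂ := (m + k)! / (m ! * (m + k + p)!)

-- `phiDeriv p k` is `φ_p^{(k)}`, see `iteratedDeriv_phiC`.
noncomputable def phiDeriv (p k : ℕ) (z : ℂ) : ℂ := ∑' m, phiDerivCoeff p k m * z ^ m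

lemma norm_phiDerivCoeff_le (p k m : ℕ) : ‖phiDerivCoeff p k m‖ ≤ (m ! : ℝ)⁻¹ := by
  rw [phiDerivCoeff, norm_div, norm_mul]
  simp only [Complex.norm_natCast]
  rw [div_le_iff₀ (by positivity), inv_mul_cancel_left₀ (by positivity)]
  exact_mod_cast Nat.factorial_le (Nat.le_add_right _ _)

lemma natCast_succ_mul_phiDerivCoeff_succ (p k m : ℕ) :
    ((m + 1 : ℕ) : ℂ) * phiDerivCoeff p k (m + 1) = phiDerivCoeff p (k + 1) m := by
  rw [phiDerivCoeff, phiDerivCoeff, show m + 1 + k = m + (k + 1) by ring, Nat.factorial_succ m]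
  push_cast
  field_simp

lemma phiDerivCoeff_eq (p k m : ℕ) :
    phiDerivCoeff p k m = ((m + k + p + 1 : ℕ) : ℂ) * phiDerivCoeff (p + 1) k m := by
  have h : ((m + k + p + 1 : ℕ) : ℂ) ≠ 0 := Nat.cast_ne_zero.mpr (Nat.succ_ne_zero _)
  rw [phiDerivCoeff, phiDerivCoeff, ← add_assoc, Nat.factorial_succ (m + k + p), Nat.cast_mul,
    mul_div_assoc', mul_left_comm, mul_div_mul_left _ _ h]

lemma hasDerivAt_phiDeriv (p k : ℕ) (z : ℂ) :
    HasDerivAt (phiDeriv p k) (phiDeriv p (k + 1) z) z := by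
  have := hasDerivAt_tsum_mul_pow (norm_phiDerivCoeff_le p k) z
  simp only [natCast_succ_mul_phiDerivCoeff_succ] at this
  exact this

lemma differentiable_phiDeriv (p k : ℕ) : Differentiable ℂ (phiDeriv p k) :=
  fun z => (hasDerivAt_phiDeriv p k z).differentiableAt

lemma phiDeriv_zero (p : ℕ) : phiDeriv p 0 = phiC p := by
  funext z
  refine tsum_congr fun m => ?_
  rw [phiDerivCoeff, add_zero, div_mul_eq_mul_div, mul_div_mul_left _ _
    (Nat.cast_ne_zero.mpr (Nat.factorial_ne_zero m))]

lemma iteratedDeriv_phiC (p k : ℕ) : iteratedDeriv k (phiC p) = phiDeriv p k := by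
  induction k with
  | zero => rw [iteratedDeriv_zero, phiDeriv_zero]
  | succ k ih =>
    exact funext fun z => by rw [iteratedDeriv_succ, ih, (hasDerivAt_phiDeriv p k z).deriv]

lemma phiDeriv_eq_add (p k : ℕ) (z : ℂ) :
    phiDeriv p k z = (p + k + 1 : ℕ) * phiDeriv (p + 1) k z + z * phiDeriv (p + 1) (k + 1) z := by
  have hz := mul_tsum_succ_mul_pow (norm_phiDerivCoeff_le (p + 1) k) z
  simp only [natCast_succ_mul_phiDerivCoeff_succ] at hz
  change z * phiDeriv (p + 1) (k + 1) z = _ at hz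
  have hsub : ∑' m : ℕ, (m : ℂ) * phiDerivCoeff (p + 1) k m * z ^ m =
      phiDeriv p k z - (p + k + 1 : ℕ) * phiDeriv (p + 1) k z := by
    have hs := summable_mul_pow_of_norm_le_inv_factorial (norm_phiDerivCoeff_le p k) z
    have hs₁ := summable_mul_pow_of_norm_le_inv_factorial (norm_phiDerivCoeff_le (p + 1) k) z
    rw [phiDeriv, phiDeriv, ← tsum_mul_left, ← hs.tsum_sub (hs₁.mul_left _)]
    exact tsum_congr fun m => by rw [phiDerivCoeff_eq p k m]; push_cast; ring
  linear_combination -hz - hsub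

lemma contDiff_phiC (p : ℕ) {n : WithTop ℕ∞} : ContDiff ℂ n (phiC p) :=
  (phiDeriv_zero p ▸ differentiable_phiDeriv p 0).contDiff

lemma hasDerivAt_pow_mul_phiDeriv (p k : ℕ) (ν z : ℂ) :
    HasDerivAt (fun w => w ^ (p + k + 1) * phiDeriv (p + 1) k (w * ν))
      (z ^ (p + k) * phiDeriv p k (z * ν)) z := by
  have hpow := hasDerivAt_pow (p + k + 1) z
  have hphi := (hasDerivAt_phiDeriv (p + 1) k (z * ν)).comp z (hasDerivAt_mul_const ν)
  refine (hpow.mul hphi).congr_deriv ?_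
  rw [phiDeriv_eq_add p k (z * ν), Nat.add_sub_cancel, Function.comp_apply]
  ring

lemma integral_pow_mul_phiDeriv (p k : ℕ) (ν : ℂ) (t : ℝ) :
    ∫ s in (0 : ℝ)..t, (s : ℂ) ^ (p + k) * phiDeriv p k (s * ν) =
      (t : ℂ) ^ (p + k + 1) * phiDeriv (p + 1) k (t * ν) := by
  have hcont : Continuous fun s : ℝ => (s : ℂ) ^ (p + k) * phiDeriv p k (s * ν) :=
    (Complex.continuous_ofReal.pow _).mul ((differentiable_phiDeriv p k).continuous.comp
      (Complex.continuous_ofReal.mul continuous_const))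
  rw [intervalIntegral.integral_eq_sub_of_hasDerivAt
    (fun s _ => (hasDerivAt_pow_mul_phiDeriv p k ν s).comp_ofReal) (hcont.intervalIntegrable 0 t)]
  simp

lemma intervalIntegral_setIntegral_comm {X E : Type*} [TopologicalSpace X] [T2Space X]
    [MeasurableSpace X] [OpensMeasurableSpace X]
    [NormedAddCommGroup E] [NormedSpace ℝ E] {μ : Measure X} [IsFiniteMeasureOnCompacts μ]
    [SFinite μ] {K : Set X} (hK : IsCompact K) {F : ℝ → X → E}
    (hF : Continuous (Function.uncurry F)) (a b : ℝ) :
    ∫ s in a..b, ∫ x in K, F s x ∂μ = ∫ x in K, (∫ s in a..b, F s x) ∂μ := by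
  simp only [intervalIntegral.intervalIntegral_eq_integral_uIoc, integral_smul]
  congr 1
  refine integral_integral_swap ?_
  rw [Measure.prod_restrict]
  exact (hF.continuousOn.integrableOn_compact (isCompact_uIcc.prod hK)).mono_set
    (Set.prod_mono Set.uIoc_subset_uIcc subset_rfl)

lemma isCompact_simplexSet (k : ℕ) : IsCompact (simplexSet k) := by
  refine (isCompact_Icc (a := 0) (b := 1)).of_isClosed_subset ?_
    fun s hs => ⟨fun j => (hs.1 j).1, fun j => (hs.1 j).2⟩
  simp only [simplexSet, Set.ofPred_and, Set.ofPred_forall]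
  exact (isClosed_iInter fun j => (isClosed_le continuous_const (continuous_apply j)).inter
      (isClosed_le (continuous_apply j) continuous_const)).inter
    (isClosed_iInter fun i => isClosed_iInter fun j => isClosed_iInter fun _ =>
      isClosed_le (continuous_apply j) (continuous_apply i))

def genocchiPoint {k : ℕ} (x : Fin (k + 1) → ℂ) (s : Fin k → ℝ) : ℂ :=
  x 0 + ∑ j : Fin k, (s j : ℂ) * (x j.succ - x j.castSucc)

lemma continuous_genocchiPoint {k : ℕ} (x : Fin (k + 1) → ℂ) : Continuous (genocchiPoint x) := by
  unfold genocchiPoint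
  fun_prop

lemma divDiff_phiC_const_mul (p : ℕ) (c : ℂ) {k : ℕ} (x : Fin (k + 1) → ℂ) :
    divDiff (fun z => phiC p (c * z)) x =
      ∫ s in simplexSet k, c ^ k * phiDeriv p k (c * genocchiPoint x s) := by
  rw [divDiff, iteratedDeriv_comp_const_mul (contDiff_phiC p) c, iteratedDeriv_phiC]
  rfl

theorem statement7_general (k p : ℕ) (lam : Fin (k + 1) → ℂ) (t : ℝ) :
    (∫ s in (0:ℝ)..t, (s : ℂ) ^ p * divDiff (fun z => phiC p ((s : ℂ) * z)) lam) =
      (t : ℂ) ^ (p + 1) * divDiff (fun z => phiC (p + 1) ((t : ℂ) * z)) lam := by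
  have hcont : Continuous (Function.uncurry fun (s : ℝ) (σ : Fin k → ℝ) =>
      (s : ℂ) ^ (p + k) * phiDeriv p k (s * genocchiPoint lam σ)) :=
    (Complex.continuous_ofReal.comp continuous_fst).pow _ |>.mul <|
      (differentiable_phiDeriv p k).continuous.comp <|
        (Complex.continuous_ofReal.comp continuous_fst).mul
          ((continuous_genocchiPoint lam).comp continuous_snd)
  calc _ = ∫ s in (0 : ℝ)..t, ∫ σ in simplexSet k,
          (s : ℂ) ^ (p + k) * phiDeriv p k (s * genocchiPoint lam σ) := by
        simp_rw [divDiff_phiC_const_mul, ← integral_const_mul, pow_add, mul_assoc]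
    _ = ∫ σ in simplexSet k, ∫ s in (0 : ℝ)..t,
          (s : ℂ) ^ (p + k) * phiDeriv p k (s * genocchiPoint lam σ) :=
        intervalIntegral_setIntegral_comm (isCompact_simplexSet k) hcont 0 t
    _ = ∫ σ in simplexSet k,
          (t : ℂ) ^ (p + k + 1) * phiDeriv (p + 1) k (t * genocchiPoint lam σ) := by
        simp_rw [integral_pow_mul_phiDeriv]
    _ = _ := by
        rw [divDiff_phiC_const_mul, ← integral_const_mul]
        simp_rw [← mul_assoc, ← pow_add, add_right_comm p k 1]

/-- `∫_0^t s^p (φ_p)_s[λ_1,…,λ_{k+1}] ds = t^{p+1} (φ_{p+1})_t[λ_1,…,λ_{k+1}]`. -/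
theorem statement7 (k p : ℕ) (lam : Fin (k + 1) → ℂ) (t : ℝ) (ht : 0 ≤ t) :
    (∫ s in (0:ℝ)..t, (s : ℂ) ^ p * divDiff (fun z => phiC p ((s : ℂ) * z)) lam) =
      (t : ℂ) ^ (p + 1) * divDiff (fun z => phiC (p + 1) ((t : ℂ) * z)) lam :=
  statement7_general k p lam t
end
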